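/- arXiv:math/0304319 — 6 statements merged into one kernel-verified Lean document; each statement's English description precedes it below -/
import Mathlib

section
/- Let M be a II_∞ factor with semifinite trace τ, let S, T be τ-measurable operators, and let a ≥ 0. Then μ_a(S ⊕ T) = inf{ max(μ_b(S), μ_c(T)) : b, c ≥ 0, b + c = a }. -/
open scoped ENNReal

/-- Abstract formulation of the singular numbers of a direct sum in a II_∞ factor:
`μS`, `μT`, `μST` are the singular-number functions of `S`, `T`, `S ⊕ T`, and
`DS`, `DT`, `DST` the corresponding trace-distribution functions
`x ↦ τ(E_{|·|}(x,∞))`, related by the Fack–Kosaki formula and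
`E_{|S⊕T|}(x,∞) = E_{|S|}(x,∞) ⊕ E_{|T|}(x,∞)`. -/
theorem stmt_1
    (μS μT μST DS DT DST : ℝ≥0∞ → ℝ≥0∞)
    (hDS_anti : Antitone DS) (hDT_anti : Antitone DT)
    (hD_sum : ∀ x, DST x = DS x + DT x)
    (hS : ∀ a, a ≠ ∞ → μS a = sInf {x | DS x ≤ a})
    (hT : ∀ a, a ≠ ∞ → μT a = sInf {x | DT x ≤ a})
    (hST : ∀ a, a ≠ ∞ → μST a = sInf {x | DST x ≤ a}) :
    ∀ a, a ≠ ∞ →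
      μST a = ⨅ p : {p : ℝ≥0∞ × ℝ≥0∞ // p.1 + p.2 = a},
        max (μS p.1.1) (μT p.1.2) := by
  intro a ha
  rw [hST a ha]
  apply le_antisymm
  · -- sInf ≤ each max (μS b) (μT c) with b + c = a
    refine le_iInf fun ⟨⟨b, c⟩, hbc⟩ => ?_
    have hb : b ≠ ∞ := fun h => ha (by simp [← hbc, h])
    have hc : c ≠ ∞ := fun h => ha (by simp [← hbc, h])
    rw [hS b hb, hT c hc]
    refine le_of_forall_gt_imp_ge_of_dense fun x hx => ?_
    have hxb : sInf {y | DS y ≤ b} < x := lt_of_le_of_lt (le_max_left _ _) hx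
    have hxc : sInf {y | DT y ≤ c} < x := lt_of_le_of_lt (le_max_right _ _) hx
    obtain ⟨y, hy, hyx⟩ := sInf_lt_iff.mp hxb
    obtain ⟨z, hz, hzx⟩ := sInf_lt_iff.mp hxc
    have h1 : DS x ≤ b := le_trans (hDS_anti hyx.le) hy
    have h2 : DT x ≤ c := le_trans (hDT_anti hzx.le) hz
    refine csInf_le (OrderBot.bddBelow _) ?_
    show DST x ≤ a
    rw [hD_sum, ← hbc]
    exact add_le_add h1 h2
  · -- iInf ≤ sInf
    refine le_sInf fun x hx => ?_
    have hx' : DS x + DT x ≤ a := by rw [← hD_sum]; exact hx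
    have hb : DS x ≤ a := le_trans le_self_add hx'
    have hbc : DS x + (a - DS x) = a := add_tsub_cancel_of_le hb
    refine le_trans (iInf_le _ ⟨⟨DS x, a - DS x⟩, hbc⟩) ?_
    have hbne : DS x ≠ ∞ := ne_top_of_le_ne_top ha hb
    have hcne : a - DS x ≠ ∞ := ne_top_of_le_ne_top ha tsub_le_self
    rw [hS _ hbne, hT _ hcne]
    refine max_le (csInf_le (OrderBot.bddBelow _) (le_refl (DS x))) (csInf_le (OrderBot.bddBelow _) ?_)
    exact ((ENNReal.cancel_of_ne hbne).le_tsub_iff_left hb).mpr hx'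
end

section
/- Let φ : (0,∞) → [0,∞) be nonincreasing and let (α_n)_{n∈ℤ} be real numbers such that for all integers k < ℓ, |∑_{j=k}^{ℓ−1} 2^j α_j| ≤ 2^k φ(2^k) + 2^ℓ φ(2^ℓ). Then there exist real numbers (β_n)_{n∈ℤ} such that α_n = β_{n−1} − 2β_n and |β_n| ≤ φ(2^n) for all n ∈ ℤ. -/
/-!
Let `T` be a primitive of `j ↦ 2^j α_j` on `ℤ`, so that the hypothesis bounds `|T ℓ - T k|` by
`r k + r ℓ` with `r n = 2^n φ(2^n)`. The closed intervals of radius `r n` about `T n` therefore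
pairwise intersect, hence (Helly's theorem on the line) share a point `c`, and
`β_n = (c - T (n+1)) / 2^(n+1)` solves `α_n = β_{n-1} - 2 β_n`; its bound `φ(2^(n+1))` is at
most `φ(2^n)` because `φ` is nonincreasing.
-/

open Finset

theorem exists_forall_le_and_le_of_le {ι α : Type*} [ConditionallyCompleteLattice α]
    [Nonempty ι] {a b : ι → α} (h : ∀ i j, a i ≤ b j) : ∃ c, ∀ i, a i ≤ c ∧ c ≤ b i :=
  ⟨⨆ i, a i, fun i =>
    ⟨le_ciSup ⟨b i, Set.forall_mem_range.2 fun j => h j i⟩ i, ciSup_le fun j => h j i⟩⟩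

theorem exists_forall_abs_sub_le {ι : Type*} [LinearOrder ι] [Nonempty ι] {x r : ι → ℝ}
    (hr : ∀ i, 0 ≤ r i) (h : ∀ i j, i < j → |x j - x i| ≤ r i + r j) :
    ∃ c, ∀ i, |c - x i| ≤ r i := by
  have hpair : ∀ i j, x i - r i ≤ x j + r j := by
    intro i j
    rcases lt_trichotomy i j with hij | rfl | hji
    · linarith [neg_abs_le (x j - x i), h i j hij]
    · linarith [hr i]
    · linarith [le_abs_self (x i - x j), h j i hji]
  obtain ⟨c, hc⟩ := exists_forall_le_and_le_of_le hpair
  exact ⟨c, fun i => abs_sub_le_iff.2 ⟨by linarith [hc i], by linarith [hc i]⟩⟩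

section Telescoping

variable {M : Type*} [AddCommGroup M]

theorem Int.exists_forall_add_one_eq_add (f : ℤ → M) : ∃ T : ℤ → M, ∀ n, T (n + 1) = T n + f n := by
  refine ⟨fun n => ∑ j ∈ Ico 0 n, f j - ∑ j ∈ Ico n 0, f j, fun n => ?_⟩
  dsimp only
  rcases le_or_gt 0 n with hn | hn
  · rw [← sum_Ico_add_eq_sum_Ico_add_one hn, Ico_eq_empty_of_le (by omega : (0 : ℤ) ≤ n + 1),
      Ico_eq_empty_of_le hn]
    abel
  · rw [Ico_eq_empty_of_le (by omega : (0 : ℤ) ≥ n + 1), Ico_eq_empty_of_le hn.le,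
      ← insert_Ico_add_one_left_eq_Ico hn, sum_insert (by simp)]
    abel

theorem Int.sum_Ico_eq_sub {T f : ℤ → M} (hT : ∀ n, T (n + 1) = T n + f n) {k ℓ : ℤ}
    (hkℓ : k ≤ ℓ) : ∑ j ∈ Ico k ℓ, f j = T ℓ - T k := by
  induction ℓ, hkℓ using Int.leInduction with
  | base => simp
  | succ m hkm ih => rw [← sum_Ico_add_eq_sum_Ico_add_one hkm, ih, hT]; abel

end Telescoping

/-- The key scalar lemma: if the dyadic partial sums `∑_{j=k}^{ℓ-1} 2^j α_j` are
controlled by `2^k φ(2^k) + 2^ℓ φ(2^ℓ)` for a nonnegative nonincreasing `φ`, then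
there exist reals `β_n` with `α_n = β_{n-1} - 2 β_n` and `|β_n| ≤ φ(2^n)`. -/
theorem stmt_2 (φ : ℝ → ℝ) (α : ℤ → ℝ)
    (hφ0 : ∀ t : ℝ, 0 < t → 0 ≤ φ t)
    (hφa : ∀ s t : ℝ, 0 < s → s ≤ t → φ t ≤ φ s)
    (hα : ∀ k ℓ : ℤ, k < ℓ →
      |∑ j ∈ Finset.Icc k (ℓ - 1), (2:ℝ) ^ j * α j| ≤
        (2:ℝ) ^ k * φ ((2:ℝ) ^ k) + (2:ℝ) ^ ℓ * φ ((2:ℝ) ^ ℓ)) :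
    ∃ β : ℤ → ℝ, ∀ n : ℤ,
      α n = β (n - 1) - 2 * β n ∧ |β n| ≤ φ ((2:ℝ) ^ n) := by
  have hpow : ∀ n : ℤ, (0 : ℝ) < 2 ^ n := fun n => zpow_pos two_pos n
  have hpow_succ : ∀ n : ℤ, (2 : ℝ) ^ (n + 1) = 2 ^ n * 2 := fun n => zpow_add_one₀ two_ne_zero n
  obtain ⟨T, hT⟩ := Int.exists_forall_add_one_eq_add fun j => (2 : ℝ) ^ j * α j
  obtain ⟨c, hc⟩ := exists_forall_abs_sub_le (x := T) (r := fun n => 2 ^ n * φ (2 ^ n))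
    (fun n => mul_nonneg (hpow n).le (hφ0 _ (hpow n)))
    (fun k ℓ hkℓ => by
      simpa only [Icc_sub_one_right_eq_Ico, Int.sum_Ico_eq_sub hT hkℓ.le] using hα k ℓ hkℓ)
  refine ⟨fun n => (c - T (n + 1)) / 2 ^ (n + 1), fun n => ⟨?_, ?_⟩⟩
  · have hn := hpow n
    simp only [sub_add_cancel, hT n, hpow_succ]
    field_simp
    ring
  · calc |(c - T (n + 1)) / 2 ^ (n + 1)| ≤ φ (2 ^ (n + 1)) := by
          rw [abs_div, abs_of_pos (hpow _), div_le_iff₀ (hpow _), mul_comm]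
          exact hc (n + 1)
      _ ≤ φ (2 ^ n) := hφa _ _ (hpow n) (by rw [hpow_succ]; linarith [hpow n])
end

section
/- If M is a II_∞ factor, then the linear span of commutators [A,B] = AB − BA with A, B ∈ M is all of M; in fact, every T ∈ M is a sum of two commutators: there exist S ∈ M and isometries V, W ∈ M with T = [WS, W*] + [TV*, V]. -/
/-!
Conjugating by isometries `U j ∈ M` with `U j * star (U j) = Q j` identifies `H` with
`ℓ²(ℕ, H)`. The shift `W = ∑ U (j+1) (U j)*` is an isometry in `M`, and the amplification
`S = ∑ U k T (U k)*` satisfies `W S W* = S - U 0 T (U 0)*`. Hence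
`[W (-S), W*] = U 0 T (U 0)*` and `[T (U 0)*, U 0] = T - U 0 T (U 0)*`, whose sum is `T`.
Both series converge strongly because their terms have orthogonal ranges and square-summable
norms, and strong limits of elements of `M` stay in `M` by the double commutant property.
-/

open ContinuousLinearMap Filter Topology

lemma star_mul_eq_zero_of_mul_star_mul_mul_star_eq_zero {R : Type*} [MonoidWithZero R] [Star R]
    {u v : R} (hu : star u * u = 1) (hv : star v * v = 1) (h : u * star u * (v * star v) = 0) :
    star u * v = 0 :=
  calc star u * v = star u * (u * star u * (v * star v)) * v := by
        simp only [← mul_assoc, hu, one_mul]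
        rw [mul_assoc, hv, mul_one]
    _ = 0 := by rw [h, mul_zero, zero_mul]

lemma eq_commutator_add_commutator_of_mul_mul_star_eq_sub {R : Type*} [Ring R] [Star R]
    {S T V W : R} (hV : star V * V = 1) (hW : star W * W = 1)
    (hS : W * S * star W = S - V * T * star V) :
    T = W * -S * star W - star W * (W * -S) + (T * star V * V - V * (T * star V)) := by
  rw [mul_neg, neg_mul, mul_neg, ← mul_assoc (star W), hW, one_mul, mul_assoc T, hV, mul_one, hS]
  noncomm_ring

section Orthogonal

variable {ι H : Type*} [NormedAddCommGroup H] [InnerProductSpace ℂ H]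

lemma orthogonalFamily_span_singleton {f : ι → H}
    (hf : Pairwise fun j k => inner ℂ (f j) (f k) = 0) :
    OrthogonalFamily ℂ (fun i => ↥(ℂ ∙ f i)) (fun i => (ℂ ∙ f i).subtypeₗᵢ) := by
  intro i j hij v w
  obtain ⟨a, ha⟩ := Submodule.mem_span_singleton.mp v.2
  obtain ⟨b, hb⟩ := Submodule.mem_span_singleton.mp w.2
  simp [← ha, ← hb, inner_smul_left, inner_smul_right, hf hij]

lemma HasSum.norm_sq_of_pairwise_inner_eq_zero {f : ι → H}
    (hf : Pairwise fun j k => inner ℂ (f j) (f k) = 0) {a : H} (h : HasSum f a) :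
    HasSum (fun i => ‖f i‖ ^ 2) (‖a‖ ^ 2) := by
  have hpyth (s : Finset ι) : ‖∑ i ∈ s, f i‖ ^ 2 = ∑ i ∈ s, ‖f i‖ ^ 2 := by
    simpa using (orthogonalFamily_span_singleton hf).norm_sum
      (fun i => ⟨f i, Submodule.mem_span_singleton_self _⟩) s
  exact (((continuous_pow 2).comp continuous_norm).tendsto a |>.comp h).congr hpyth

lemma summable_of_pairwise_inner_eq_zero [CompleteSpace H] {f : ι → H}
    (hf : Pairwise fun j k => inner ℂ (f j) (f k) = 0) (h : Summable fun i => ‖f i‖ ^ 2) :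
    Summable f := by
  simpa using ((orthogonalFamily_span_singleton hf).summable_iff_norm_sq_summable
    (fun i => ⟨f i, Submodule.mem_span_singleton_self _⟩)).2 (by simpa using h)

end Orthogonal

lemma ContinuousLinearMap.exists_hasSum_apply {ι 𝕜 E F : Type*} [Countable ι]
    [NontriviallyNormedField 𝕜] [NormedAddCommGroup E] [NormedSpace 𝕜 E] [CompleteSpace E]
    [NormedAddCommGroup F] [NormedSpace 𝕜 F] (A : ι → E →L[𝕜] F)
    (h : ∀ x, Summable fun j => A j x) :
    ∃ B : E →L[𝕜] F, ∀ x, HasSum (fun j => A j x) (B x) :=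
  ⟨continuousLinearMapOfTendsto (l := atTop) (fun s : Finset ι => ∑ j ∈ s, A j)
    (f := fun x => ∑' j, A j x)
    (tendsto_pi_nhds.2 fun x => by simp only [sum_apply]; exact (h x).hasSum),
    fun x => (h x).hasSum⟩

lemma VonNeumannAlgebra.mem_of_hasSum_apply {ι H : Type*} [NormedAddCommGroup H]
    [InnerProductSpace ℂ H] [CompleteSpace H] (M : VonNeumannAlgebra H)
    {A : ι → H →L[ℂ] H} {B : H →L[ℂ] H} (hA : ∀ j, A j ∈ M)
    (hB : ∀ x, HasSum (fun j => A j x) (B x)) : B ∈ M := by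
  rw [← M.commutant_commutant, VonNeumannAlgebra.mem_commutant_iff]
  intro g hg
  rw [VonNeumannAlgebra.mem_commutant_iff] at hg
  ext x
  have hcomm (j : ι) : g (A j x) = A j (g x) := by
    simpa using congr($(hg (A j) (hA j)) x).symm
  have hgB : HasSum (fun j => A j (g x)) (g (B x)) := by
    simpa only [← hcomm] using (hB x).mapL g
  simpa using hgB.unique (hB (g x))

section IsometryFamily

variable {ι H : Type*} [NormedAddCommGroup H] [InnerProductSpace ℂ H] [CompleteSpace H]

lemma ContinuousLinearMap.norm_map_of_star_mul_self_eq_one {U : H →L[ℂ] H}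
    (h : star U * U = 1) (x : H) : ‖U x‖ = ‖x‖ :=
  (norm_map_iff_adjoint_comp_self U).2 (by rwa [← star_eq_adjoint]) x

lemma ContinuousLinearMap.inner_map_map_eq_zero_of_star_mul_eq_zero {U V : H →L[ℂ] H}
    (h : star U * V = 0) (x y : H) : inner ℂ (U x) (V y) = 0 := by
  rw [← adjoint_inner_right, ← star_eq_adjoint, ← mul_apply_eq_comp, h, zero_apply,
    inner_zero_right]

variable {U : ι → H →L[ℂ] H} (hiso : ∀ j, star (U j) * U j = 1)
  (horth : Pairwise fun j k => star (U j) * U k = 0)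
  (hsum : ∀ x, HasSum (fun j => U j (star (U j) x)) x)
include hiso horth hsum

lemma hasSum_norm_sq_star_apply (x : H) :
    HasSum (fun j => ‖star (U j) x‖ ^ 2) (‖x‖ ^ 2) := by
  simpa [norm_map_of_star_mul_self_eq_one (hiso _)] using
    (hsum x).norm_sq_of_pairwise_inner_eq_zero fun j k hjk =>
      inner_map_map_eq_zero_of_star_mul_eq_zero (horth hjk) _ _

lemma exists_hasSum_apply_map_map_star [Countable ι] {σ : ι → ι} (hσ : σ.Injective)
    (B : ι → H →L[ℂ] H) {C : ℝ} (hB : ∀ j, ‖B j‖ ≤ C) :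
    ∃ S : H →L[ℂ] H, ∀ x, HasSum (fun j => U (σ j) (B j (star (U j) x))) (S x) := by
  have hle (x : H) (j : ι) :
      ‖U (σ j) (B j (star (U j) x))‖ ^ 2 ≤ C ^ 2 * ‖star (U j) x‖ ^ 2 := by
    rw [norm_map_of_star_mul_self_eq_one (hiso _), ← mul_pow]
    exact pow_le_pow_left₀ (norm_nonneg _) ((B j).le_of_opNorm_le (hB j) _) 2
  simpa only [mul_apply_eq_comp] using exists_hasSum_apply (fun j => U (σ j) * B j * star (U j))
    fun x => summable_of_pairwise_inner_eq_zero
      (fun j k hjk => by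
        simpa only [mul_apply_eq_comp] using
          inner_map_map_eq_zero_of_star_mul_eq_zero (horth (hσ.ne hjk)) _ _)
      (((hasSum_norm_sq_star_apply hiso horth hsum x).summable.mul_left (C ^ 2)).of_nonneg_of_le
        (fun _ => sq_nonneg _) (by simpa only [mul_apply_eq_comp] using hle x))

end IsometryFamily

section Shift

variable {H : Type*} [NormedAddCommGroup H] [InnerProductSpace ℂ H] [CompleteSpace H]
  {U : ℕ → H →L[ℂ] H}

lemma mul_mul_star_eq_sub_of_mul_eq_succ {W S T : H →L[ℂ] H} (hWU : ∀ k, W * U k = U (k + 1))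
    (hS : ∀ x, HasSum (fun k => U k (T (star (U k) x))) (S x)) :
    W * S * star W = S - U 0 * T * star (U 0) := by
  ext x
  have hstar (k : ℕ) : star (U k) (star W x) = star (U (k + 1)) x := by
    rw [← mul_apply_eq_comp, ← star_mul, hWU]
  have hWUx (k : ℕ) (y : H) : W (U k y) = U (k + 1) y := by
    rw [← mul_apply_eq_comp, hWU]
  have h := (hS (star W x)).mapL W
  simp only [hstar, hWUx] at h
  simpa using h.unique ((hasSum_nat_add_iff' 1).2 (hS x))

variable (hiso : ∀ j, star (U j) * U j = 1) (horth : Pairwise fun j k => star (U j) * U k = 0)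
  (hsum : ∀ x, HasSum (fun j => U j (star (U j) x)) x) (M : VonNeumannAlgebra H)
  (hU : ∀ j, U j ∈ M)
include hiso horth hsum hU

lemma exists_isometry_mul_eq_succ :
    ∃ W ∈ M, star W * W = 1 ∧ ∀ k, W * U k = U (k + 1) := by
  obtain ⟨W, hW⟩ := exists_hasSum_apply_map_map_star hiso horth hsum (add_left_injective 1)
    (fun _ => 1) (fun _ => norm_id_le)
  have hWM : W ∈ M := M.mem_of_hasSum_apply
    (fun j => mul_mem (mul_mem (hU _) (one_mem _)) (star_mem (hU j)))
    (by simpa only [mul_apply_eq_comp] using hW)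
  have hnorm (x : H) : ‖W x‖ = ‖x‖ := by
    have h := (hW x).norm_sq_of_pairwise_inner_eq_zero fun j k hjk =>
      inner_map_map_eq_zero_of_star_mul_eq_zero (horth ((add_left_injective 1).ne hjk)) _ _
    simp only [norm_map_of_star_mul_self_eq_one (hiso _)] at h
    exact (sq_eq_sq₀ (norm_nonneg _) (norm_nonneg _)).1
      (h.unique (hasSum_norm_sq_star_apply hiso horth hsum x))
  refine ⟨W, hWM, by rw [star_eq_adjoint]; exact (norm_map_iff_adjoint_comp_self W).1 hnorm,
    fun k => ?_⟩
  ext z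
  have hsingle : HasSum (fun j => U (j + 1) ((1 : H →L[ℂ] H) (star (U j) (U k z))))
      (U (k + 1) z) := by
    convert hasSum_single k fun j hjk => ?_ using 1
    · simp [← mul_apply_eq_comp, hiso]
    · simp [← mul_apply_eq_comp (star (U j)), horth hjk]
  exact (hW (U k z)).unique hsingle

lemma exists_mem_mul_mul_star_eq_sub {W T : H →L[ℂ] H}
    (hWU : ∀ k, W * U k = U (k + 1)) (hT : T ∈ M) :
    ∃ S ∈ M, W * S * star W = S - U 0 * T * star (U 0) := by
  obtain ⟨S, hS⟩ : ∃ S : H →L[ℂ] H, ∀ x, HasSum (fun k => U k (T (star (U k) x))) (S x) :=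
    exists_hasSum_apply_map_map_star hiso horth hsum Function.injective_id
      (fun _ => T) (fun _ => le_rfl)
  refine ⟨S, M.mem_of_hasSum_apply (fun j => mul_mem (mul_mem (hU j) hT) (star_mem (hU j)))
    (by simpa only [mul_apply_eq_comp] using hS), mul_mul_star_eq_sub_of_mul_eq_succ hWU hS⟩

end Shift

theorem stmt_4_general {H : Type*} [NormedAddCommGroup H] [InnerProductSpace ℂ H]
    [CompleteSpace H] (M : VonNeumannAlgebra H)
    (hQ : ∃ Q : ℕ → H →L[ℂ] H,
      (∀ j, Q j ∈ M ∧ IsSelfAdjoint (Q j) ∧ Q j * Q j = Q j) ∧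
      (∀ j k, j ≠ k → Q j * Q k = 0) ∧
      (∀ x : H, HasSum (fun j => Q j x) x) ∧
      (∀ j, ∃ U ∈ M, star U * U = 1 ∧ U * star U = Q j)) :
    (∀ T ∈ M, (T : H →L[ℂ] H) ∈
      Submodule.span ℂ {x : H →L[ℂ] H | ∃ A ∈ M, ∃ B ∈ M, x = A * B - B * A}) ∧
    ∀ T ∈ M, ∃ S V W : H →L[ℂ] H, S ∈ M ∧ V ∈ M ∧ W ∈ M ∧
      star V * V = 1 ∧ star W * W = 1 ∧
      T = ((W * S) * star W - star W * (W * S)) +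
          ((T * star V) * V - V * (T * star V)) := by
  obtain ⟨Q, -, hQorth, hQsum, hQU⟩ := hQ
  choose U hUM hUiso hUQ using hQU
  have horth : Pairwise fun j k => star (U j) * U k = 0 := fun j k hjk =>
    star_mul_eq_zero_of_mul_star_mul_mul_star_eq_zero (hUiso j) (hUiso k)
      (by rw [hUQ, hUQ, hQorth j k hjk])
  have hsum (x : H) : HasSum (fun j => U j (star (U j) x)) x := by
    simpa only [← mul_apply_eq_comp, hUQ] using hQsum x
  obtain ⟨W, hWM, hWiso, hWU⟩ := exists_isometry_mul_eq_succ hUiso horth hsum M hUM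
  refine ⟨fun T hT => ?_, fun T hT => ?_⟩ <;>
    obtain ⟨S, hSM, hWS⟩ := exists_mem_mul_mul_star_eq_sub hUiso horth hsum M hUM hWU hT <;>
    have hT' := eq_commutator_add_commutator_of_mul_mul_star_eq_sub (hUiso 0) hWiso hWS
  · rw [hT']
    exact add_mem (Submodule.subset_span ⟨_, mul_mem hWM (neg_mem hSM), _, star_mem hWM, rfl⟩)
      (Submodule.subset_span ⟨_, mul_mem hT (star_mem (hUM 0)), _, hUM 0, rfl⟩)
  · exact ⟨-S, U 0, W, neg_mem hSM, hUM 0, hWM, hUiso 0, hWiso, hT'⟩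

/-- If `M` is a II_∞ factor (encoded by: `M` is a von Neumann algebra which is a factor,
has no minimal projections, and possesses a sequence of mutually orthogonal projections,
each equivalent to `1`, summing to `1`), then every `T ∈ M` lies in the linear span of
commutators, and in fact `T = [WS, W*] + [TV*, V]` for suitable `S ∈ M` and
isometries `V, W ∈ M`. -/
theorem stmt_4 {H : Type*} [NormedAddCommGroup H] [InnerProductSpace ℂ H]
    [CompleteSpace H] (M : VonNeumannAlgebra H)
    (hfactor : ∀ x ∈ M, (∀ y ∈ M, x * y = y * x) → ∃ c : ℂ, x = c • (1 : H →L[ℂ] H))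
    (hdiffuse : ∀ E : H →L[ℂ] H, E ∈ M → IsSelfAdjoint E → E * E = E → E ≠ 0 →
      ∃ E' : H →L[ℂ] H, E' ∈ M ∧ IsSelfAdjoint E' ∧ E' * E' = E' ∧
        E' ≠ 0 ∧ E' ≠ E ∧ E * E' = E')
    (hQ : ∃ Q : ℕ → H →L[ℂ] H,
      (∀ j, Q j ∈ M ∧ IsSelfAdjoint (Q j) ∧ Q j * Q j = Q j) ∧
      (∀ j k, j ≠ k → Q j * Q k = 0) ∧
      (∀ x : H, HasSum (fun j => Q j x) x) ∧
      (∀ j, ∃ U ∈ M, star U * U = 1 ∧ U * star U = Q j)) :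
    (∀ T ∈ M, (T : H →L[ℂ] H) ∈
      Submodule.span ℂ {x : H →L[ℂ] H | ∃ A ∈ M, ∃ B ∈ M, x = A * B - B * A}) ∧
    ∀ T ∈ M, ∃ S V W : H →L[ℂ] H, S ∈ M ∧ V ∈ M ∧ W ∈ M ∧
      star V * V = 1 ∧ star W * W = 1 ∧
      T = ((W * S) * star W - star W * (W * S)) +
          ((T * star V) * V - V * (T * star V)) :=
  stmt_4_general M hQ
end

section
/- Let M be a II₁- or II_∞-factor and let I, J be (M,M)-sub-bimodules of the algebra of τ-measurable operators. Then [IJ, M] ⊆ [I, J], where IJ is the submodule spanned by products AB with A ∈ I, B ∈ J, and [X, Y] denotes the linear span of commutators. -/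
/-- The commutator space `[X, Y]`: the additive group generated by all commutators
`a * b - b * a` with `a ∈ X`, `b ∈ Y`. -/
def commutatorSpace {A : Type*} [Ring A] (X Y : Set A) : AddSubgroup A :=
  AddSubgroup.closure {z | ∃ a ∈ X, ∃ b ∈ Y, z = a * b - b * a}

/-!
`[AB, m] = [A, Bm] - [mA, B]`, and `Bm ∈ J`, `mA ∈ I` because `I` and `J` are bimodules.
Since `p ↦ [p, m]` is additive, the commutators with elements of the additive span of the
products `AB` then lie in `[I, J]` as well.
-/

namespace commutatorSpace

variable {A : Type*} [Ring A]

theorem commutator_mem {X Y : Set A} {a b : A} (ha : a ∈ X) (hb : b ∈ Y) :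
    a * b - b * a ∈ commutatorSpace X Y :=
  AddSubgroup.subset_closure ⟨a, ha, b, hb, rfl⟩

theorem le_of_commutator_mem {X Y : Set A} {G : AddSubgroup A}
    (h : ∀ a ∈ X, ∀ b ∈ Y, a * b - b * a ∈ G) : commutatorSpace X Y ≤ G :=
  (AddSubgroup.closure_le _).2 <| by
    rintro _ ⟨a, ha, b, hb, rfl⟩
    exact h a ha b hb

theorem closure_left_le (X Y : Set A) :
    commutatorSpace (AddSubgroup.closure X : Set A) Y ≤ commutatorSpace X Y := by
  refine le_of_commutator_mem fun p hp m hm => ?_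
  let bracket : A →+ A := AddMonoidHom.mulRight m - AddMonoidHom.mulLeft m
  have : AddSubgroup.closure X ≤ (commutatorSpace X Y).comap bracket :=
    (AddSubgroup.closure_le _).2 fun a ha => commutator_mem ha hm
  exact this hp

theorem mul_commutator_mem {I J : Set A} {a b m : A} (ha : a ∈ I) (hb : b ∈ J)
    (hma : m * a ∈ I) (hbm : b * m ∈ J) :
    a * b * m - m * (a * b) ∈ commutatorSpace I J := by
  have h : a * b * m - m * (a * b) = (a * (b * m) - b * m * a) - (m * a * b - b * (m * a)) := by
    noncomm_ring
  rw [h]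
  exact sub_mem (commutator_mem ha hbm) (commutator_mem hma hb)

end commutatorSpace

open commutatorSpace in
theorem stmt_5_general {A : Type*} [Ring A] (M : Subring A) (I J : AddSubgroup A)
    (hIl : ∀ m ∈ M, ∀ a ∈ I, m * a ∈ I)
    (hJr : ∀ m ∈ M, ∀ b ∈ J, b * m ∈ J) :
    (commutatorSpace
        ((AddSubgroup.closure {x : A | ∃ a ∈ I, ∃ b ∈ J, x = a * b} : AddSubgroup A) :
          Set A)
        (M : Set A) : Set A) ⊆
      (commutatorSpace (I : Set A) (J : Set A) : Set A) := by
  refine (closure_left_le _ _).trans (le_of_commutator_mem ?_)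
  rintro _ ⟨a, ha, b, hb, rfl⟩ m hm
  exact mul_commutator_mem ha hb (hIl m hm a ha) (hJr m hm b hb)

/-- If `M` is a subring (playing the role of a type II factor inside the algebra `A` of
τ-measurable operators) and `I`, `J` are sub-(M,M)-bimodules of `A`, then
`[IJ, M] ⊆ [I, J]`, where `IJ` is the additive span of products `a*b`, `a ∈ I`, `b ∈ J`. -/
theorem stmt_5 {A : Type*} [Ring A] (M : Subring A) (I J : AddSubgroup A)
    (hIl : ∀ m ∈ M, ∀ a ∈ I, m * a ∈ I) (hIr : ∀ m ∈ M, ∀ a ∈ I, a * m ∈ I)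
    (hJl : ∀ m ∈ M, ∀ b ∈ J, m * b ∈ J) (hJr : ∀ m ∈ M, ∀ b ∈ J, b * m ∈ J) :
    (commutatorSpace
        ((AddSubgroup.closure {x : A | ∃ a ∈ I, ∃ b ∈ J, x = a * b} : AddSubgroup A) :
          Set A)
        (M : Set A) : Set A) ⊆
      (commutatorSpace (I : Set A) (J : Set A) : Set A) :=
  stmt_5_general M I J hIl hJr
end

section
/- There exists a function f ∈ L¹[0,1] with ∫₀¹ f(t) dt = 0 such that the function s ↦ (1/s)∫_s^1 f(t) dt is not integrable on (0,1). Explicitly, f(t) = 1/(t (log t)²) for 0 < t < 1/2 and f(t) = −2/log 2 for 1/2 ≤ t < 1 has these properties. -/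
open MeasureTheory

/-- The explicit witness: `f(t) = 1/(t (log t)²)` for `0 < t < 1/2` and
`f(t) = -2/log 2` for `1/2 ≤ t`. -/
noncomputable def f7 : ℝ → ℝ := fun t =>
  if t < 1/2 then 1 / (t * (Real.log t) ^ 2) else -2 / Real.log 2

/-!
On `(0, 1/2)` the witness `f7` is the derivative of `-(log t)⁻¹`, which tends to `0` as `t → 0⁺`;
hence `f7` is integrable near `0` and, the constant part on `[1/2, 1)` cancelling the boundary
term at `1/2`, `∫_s^1 f7 = (log s)⁻¹` for `0 ≤ s ≤ 1/2`. Thus `s⁻¹ ∫_s^1 f7 = 1/(s log s)` near `0`,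
the derivative of `log |log s|`, which is unbounded at `0⁺`; so it is not integrable there.
-/

open Set Filter Topology Real

theorem continuousOn_inv_log : ContinuousOn (fun t => (log t)⁻¹) (Ioo (-1) 1) := by
  intro x hx
  rcases eq_or_ne x 0 with rfl | hx0
  · -- Mathlib's junk value `(log 0)⁻¹ = 0` is also the limit at `0`.
    refine (continuousWithinAt_compl_self.mp ?_).continuousWithinAt
    simpa [ContinuousWithinAt, Function.comp_def] using
      tendsto_inv_atBot_zero.comp tendsto_log_nhdsNE_zero
  · have hlog : log x ≠ 0 := log_ne_zero.2 ⟨hx0, hx.2.ne, hx.1.ne'⟩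
    exact ((continuousAt_log hx0).inv₀ hlog).continuousWithinAt

theorem hasDerivAt_neg_inv_log {x : ℝ} (hx : x ≠ 0) (hlog : log x ≠ 0) :
    HasDerivAt (fun t => -(log t)⁻¹) (1 / (x * log x ^ 2)) x := by
  have h : HasDerivAt (fun t => -(log t)⁻¹) (-(-x⁻¹ / log x ^ 2)) x :=
    ((hasDerivAt_log hx).inv hlog).neg
  convert h using 1
  ring

theorem not_integrableOn_Ioo_inv_mul_inv_log {b : ℝ} (hb : 0 < b) :
    ¬ IntegrableOn (fun s => s⁻¹ * (log s)⁻¹) (Ioo 0 b) := by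
  have hderiv : ∀ᶠ s in 𝓝[>] 0, HasDerivAt (fun s => log (log s)) (s⁻¹ * (log s)⁻¹) s := by
    filter_upwards [Ioo_mem_nhdsGT one_pos] with s hs
    simpa [div_eq_mul_inv] using (hasDerivAt_log hs.1.ne').log (log_neg hs.1 hs.2).ne
  have hnorm : Tendsto (fun s => ‖log (log s)‖) (𝓝[>] 0) atTop := by
    have : Tendsto (fun s => log (log s)) (𝓝[>] 0) atTop := by
      simpa [Function.comp_def, log_abs] using
        tendsto_log_atTop.comp (tendsto_abs_atBot_atTop.comp tendsto_log_nhdsGT_zero)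
    exact tendsto_norm_atTop_atTop.comp this
  exact not_integrableOn_of_tendsto_norm_atTop_of_deriv_isBigO_filter _ (Ioo_mem_nhdsGT hb)
    (hderiv.mono fun s hs => hs.differentiableAt) hnorm
    (EventuallyEq.isBigO (hderiv.mono fun s hs => hs.deriv))

theorem f7_of_lt {t : ℝ} (ht : t < 1/2) : f7 t = 1 / (t * log t ^ 2) := if_pos ht

theorem eqOn_f7_uIcc_half_one : EqOn f7 (fun _ => -2 / log 2) (uIcc (1/2) 1) := by
  intro t ht
  rw [uIcc_of_le (by norm_num)] at ht
  exact if_neg ht.1.not_gt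

theorem hasDerivAt_neg_inv_log_f7 {x : ℝ} (hx : x ∈ Ioo 0 (1/2)) :
    HasDerivAt (fun t => -(log t)⁻¹) (f7 x) x := by
  rw [f7_of_lt hx.2]
  exact hasDerivAt_neg_inv_log hx.1.ne' (log_neg hx.1 (by linarith [hx.2])).ne

theorem continuousOn_neg_inv_log_Icc_zero_half :
    ContinuousOn (fun t => -(log t)⁻¹) (Icc 0 (1/2)) :=
  (continuousOn_inv_log.mono (Icc_subset_Ioo (by norm_num) (by norm_num))).neg

theorem integrableOn_f7_Ioc_zero_half : IntegrableOn f7 (Ioc 0 (1/2)) :=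
  intervalIntegral.integrableOn_deriv_of_nonneg continuousOn_neg_inv_log_Icc_zero_half
    (fun _ hx => hasDerivAt_neg_inv_log_f7 hx) fun x ⟨hx0, hx⟩ => by
      rw [f7_of_lt hx]; positivity

theorem intervalIntegrable_f7_of_le_half {s : ℝ} (hs0 : 0 ≤ s) (hs : s ≤ 1/2) :
    IntervalIntegrable f7 volume s (1/2) :=
  (intervalIntegrable_iff_integrableOn_Ioc_of_le hs).2
    (integrableOn_f7_Ioc_zero_half.mono_set (Ioc_subset_Ioc_left hs0))

theorem intervalIntegrable_f7_half_one : IntervalIntegrable f7 volume (1/2) 1 :=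
  (continuousOn_const.congr eqOn_f7_uIcc_half_one).intervalIntegrable

theorem intervalIntegral_f7_of_le_half {s : ℝ} (hs0 : 0 ≤ s) (hs : s ≤ 1/2) :
    ∫ t in s..1/2, f7 t = (log s)⁻¹ + (log 2)⁻¹ := by
  rw [intervalIntegral.integral_eq_sub_of_hasDerivAt_of_le hs
    (continuousOn_neg_inv_log_Icc_zero_half.mono (Icc_subset_Icc_left hs0))
    (fun x hx => hasDerivAt_neg_inv_log_f7 ⟨hs0.trans_lt hx.1, hx.2⟩)
    (intervalIntegrable_f7_of_le_half hs0 hs), one_div, log_inv]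
  ring

theorem intervalIntegral_f7_half_one : ∫ t in (1/2)..1, f7 t = -(log 2)⁻¹ := by
  rw [intervalIntegral.integral_congr eqOn_f7_uIcc_half_one, intervalIntegral.integral_const,
    smul_eq_mul]
  ring

theorem setIntegral_Ioo_f7 {s : ℝ} (hs0 : 0 ≤ s) (hs : s ≤ 1/2) :
    ∫ t in Ioo s 1, f7 t = (log s)⁻¹ := by
  rw [← integral_Ioc_eq_integral_Ioo, ← intervalIntegral.integral_of_le (by linarith),
    ← intervalIntegral.integral_add_adjacent_intervals
      (intervalIntegrable_f7_of_le_half hs0 hs) intervalIntegrable_f7_half_one,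
    intervalIntegral_f7_of_le_half hs0 hs, intervalIntegral_f7_half_one]
  ring

/-- There exists `f ∈ L¹[0,1]` with `∫₀¹ f = 0` such that `s ↦ (1/s)∫_s^1 f` is not
integrable on `(0,1)`; the explicit `f7` has these properties. -/
theorem stmt_7 :
    (IntegrableOn f7 (Set.Ioo 0 1) ∧
      (∫ t in Set.Ioo (0:ℝ) 1, f7 t) = 0 ∧
      ¬ IntegrableOn (fun s => s⁻¹ * ∫ t in Set.Ioo s 1, f7 t) (Set.Ioo 0 1)) ∧
    ∃ f : ℝ → ℝ, IntegrableOn f (Set.Ioo 0 1) ∧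
      (∫ t in Set.Ioo (0:ℝ) 1, f t) = 0 ∧
      ¬ IntegrableOn (fun s => s⁻¹ * ∫ t in Set.Ioo s 1, f t) (Set.Ioo 0 1) := by
  have hint : IntegrableOn f7 (Ioo 0 1) :=
    ((intervalIntegrable_f7_of_le_half le_rfl (by norm_num)).trans
      intervalIntegrable_f7_half_one).1.mono_set Ioo_subset_Ioc_self
  -- `log 0 = 0` in Mathlib, so the case `s = 0` of `setIntegral_Ioo_f7` is `∫₀¹ f7 = 0`.
  have hzero : ∫ t in Ioo (0:ℝ) 1, f7 t = 0 := by
    simpa using setIntegral_Ioo_f7 le_rfl (by norm_num)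
  have hnot : ¬ IntegrableOn (fun s => s⁻¹ * ∫ t in Ioo s 1, f7 t) (Ioo 0 1) := fun h =>
    not_integrableOn_Ioo_inv_mul_inv_log (b := 1/2) (by norm_num)
      ((h.mono_set (Ioo_subset_Ioo_right (by norm_num))).congr_fun
        (fun s hs => by simp only [setIntegral_Ioo_f7 hs.1.le hs.2.le]) measurableSet_Ioo)
  exact ⟨⟨hint, hzero, hnot⟩, f7, hint, hzero, hnot⟩
end

section
/- Let T be a normal τ-measurable operator with μ_t(T) → 0 as t → ∞, with spectral measure ν_T on ℂ given by ν_T(B) = τ(E_T(B)). Then for any α ∈ ℂ with |α| ≤ 1 and 0 < r < s < ∞, |Φ(r,s; αT) − α Φ(r,s; T)| ≤ r τ(E_{|T|}(r,∞)) + s τ(E_{|T|}(s,∞)), where Φ(r,s;T) = ∫_{r<|z|≤s} z dν_T(z). -/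
/-!
Pulling the shell `r < |w| ≤ s` back along `z ↦ αz` turns `Φ(r,s;αT)` into `α` times the
integral of `z` over the dilated shell `r/|α| < |z| ≤ s/|α|`. For `|α| ≤ 1` the two shells differ
only by the thin shells `r < |z| ≤ r/|α|` and `s < |z| ≤ s/|α|`; there `|α| |z|` is at most `r`
resp. `s`, and their masses are at most the tails `ν(|z| > r)` and `ν(|z| > s)`.
-/

open MeasureTheory Set

lemma setIntegral_sub_setIntegral_eq_sdiff {X E : Type*} [MeasurableSpace X]
    [NormedAddCommGroup E] [NormedSpace ℝ E] {μ : Measure X} {f : X → E} {s t : Set X}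
    (hs : MeasurableSet s) (ht : MeasurableSet t)
    (hfs : IntegrableOn f s μ) (hft : IntegrableOn f t μ) :
    ∫ x in s, f x ∂μ - ∫ x in t, f x ∂μ =
      ∫ x in s \ t, f x ∂μ - ∫ x in t \ s, f x ∂μ := by
  rw [← integral_inter_add_sdiff ht hfs, ← integral_inter_add_sdiff hs hft, inter_comm]
  abel

lemma Ioc_sdiff_Ioc_subset_Ioc_left {r s r' s' : ℝ} (hs : s ≤ s') :
    Ioc r s \ Ioc r' s' ⊆ Ioc r r' := by
  rintro x ⟨⟨hrx, hxs⟩, hx⟩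
  exact ⟨hrx, not_lt.mp fun h => hx ⟨h, hxs.trans hs⟩⟩

lemma Ioc_sdiff_Ioc_subset_Ioc_right {r s r' s' : ℝ} (hr : r ≤ r') :
    Ioc r' s' \ Ioc r s ⊆ Ioc s s' := by
  rintro x ⟨⟨hrx, hxs⟩, hx⟩
  exact ⟨not_le.mp fun h => hx ⟨hr.trans_lt hrx, h⟩, hxs⟩

section NormShells

variable {E : Type*} [NormedAddCommGroup E] [MeasurableSpace E] {ν : Measure E}

lemma measurableSet_norm_shell [OpensMeasurableSpace E] (x y : ℝ) :
    MeasurableSet {z : E | x < ‖z‖ ∧ ‖z‖ ≤ y} :=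
  measurableSet_Ioc.preimage measurable_norm

lemma integrableOn_id_norm_shell [OpensMeasurableSpace E] [SecondCountableTopology E]
    {x y : ℝ} (hx : ν {z : E | x < ‖z‖} < ⊤) :
    IntegrableOn (fun z => z) {z : E | x < ‖z‖ ∧ ‖z‖ ≤ y} ν :=
  Measure.integrableOn_of_bounded (M := y)
    ((measure_mono fun _ hz => hz.1).trans_lt hx).ne aestronglyMeasurable_id
    ((ae_restrict_iff' (measurableSet_norm_shell x y)).mpr (ae_of_all _ fun _ hz => hz.2))

lemma norm_setIntegral_id_le_of_subset_shell [NormedSpace ℝ E] {x c : ℝ} {S : Set E}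
    (hS : S ⊆ {z : E | x < ‖z‖ ∧ ‖z‖ ≤ c}) (hx : ν {z : E | x < ‖z‖} < ⊤)
    (hc : 0 ≤ c) :
    ‖∫ z in S, z ∂ν‖ ≤ c * (ν {z : E | x < ‖z‖}).toReal := by
  have hS' : S ⊆ {z : E | x < ‖z‖} := fun z hz => (hS hz).1
  calc ‖∫ z in S, z ∂ν‖ ≤ c * ν.real S :=
        norm_setIntegral_le_of_norm_le_const ((measure_mono hS').trans_lt hx)
          fun z hz => (hS hz).2
    _ ≤ c * (ν {z : E | x < ‖z‖}).toReal :=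
        mul_le_mul_of_nonneg_left (ENNReal.toReal_mono hx.ne (measure_mono hS')) hc

lemma norm_setIntegral_id_shell_sub_le [NormedSpace ℝ E] [OpensMeasurableSpace E]
    [SecondCountableTopology E] {r s r' s' : ℝ} (hrr' : r ≤ r') (hss' : s ≤ s')
    (hr' : 0 ≤ r') (hs' : 0 ≤ s') (hr : ν {z : E | r < ‖z‖} < ⊤)
    (hs : ν {z : E | s < ‖z‖} < ⊤) :
    ‖∫ z in {z : E | r' < ‖z‖ ∧ ‖z‖ ≤ s'}, z ∂ν -
        ∫ z in {z : E | r < ‖z‖ ∧ ‖z‖ ≤ s}, z ∂ν‖ ≤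
      r' * (ν {z : E | r < ‖z‖}).toReal + s' * (ν {z : E | s < ‖z‖}).toReal := by
  have hr's : ν {z : E | r' < ‖z‖} < ⊤ :=
    (measure_mono fun _ hz => hrr'.trans_lt hz).trans_lt hr
  rw [setIntegral_sub_setIntegral_eq_sdiff (measurableSet_norm_shell _ _)
    (measurableSet_norm_shell _ _) (integrableOn_id_norm_shell hr's)
    (integrableOn_id_norm_shell hr), add_comm]
  refine (norm_sub_le _ _).trans (add_le_add ?_ ?_)
  · exact norm_setIntegral_id_le_of_subset_shell
      (fun _ hz => Ioc_sdiff_Ioc_subset_Ioc_right hrr' hz) hs hs'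
  · exact norm_setIntegral_id_le_of_subset_shell
      (fun _ hz => Ioc_sdiff_Ioc_subset_Ioc_left hss' hz) hr hr'

end NormShells

lemma preimage_mul_left_norm_shell {𝕜 : Type*} [NormedDivisionRing 𝕜] {α : 𝕜}
    (hα : α ≠ 0) (r s : ℝ) :
    (α * ·) ⁻¹' {z : 𝕜 | r < ‖z‖ ∧ ‖z‖ ≤ s} =
      {z : 𝕜 | r / ‖α‖ < ‖z‖ ∧ ‖z‖ ≤ s / ‖α‖} := by
  have ha : 0 < ‖α‖ := norm_pos_iff.mpr hα
  ext z
  simp only [mem_preimage, mem_ofPred_eq, norm_mul, div_lt_iff₀ ha, le_div_iff₀ ha,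
    mul_comm ‖z‖]

/-- For a normal τ-measurable operator `T` with `μ_t(T) → 0`, the spectral measure
`ν = ν_T` on `ℂ` satisfies `ν(|z| > x) = τ(E_{|T|}(x,∞)) < ∞` for `x > 0`, and the
spectral measure of `αT` is the pushforward of `ν` under `z ↦ αz`.  Then for `|α| ≤ 1`
and `0 < r < s`,
`|Φ(r,s;αT) − α Φ(r,s;T)| ≤ r τ(E_{|T|}(r,∞)) + s τ(E_{|T|}(s,∞))`, where
`Φ(r,s;T) = ∫_{r<|z|≤s} z dν_T(z)`. -/
theorem stmt_9 (ν : Measure ℂ) (α : ℂ) (hα : ‖α‖ ≤ 1)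
    (hfin : ∀ x : ℝ, 0 < x → ν {z : ℂ | x < ‖z‖} < ⊤)
    (r s : ℝ) (hr : 0 < r) (hrs : r < s) :
    ‖(∫ z in {z : ℂ | r < ‖z‖ ∧ ‖z‖ ≤ s}, z ∂(Measure.map (fun z => α * z) ν)) -
        α * ∫ z in {z : ℂ | r < ‖z‖ ∧ ‖z‖ ≤ s}, z ∂ν‖ ≤
      r * (ν {z : ℂ | r < ‖z‖}).toReal + s * (ν {z : ℂ | s < ‖z‖}).toReal := by
  have hs : 0 < s := hr.trans hrs
  rw [setIntegral_map (f := fun z => z) (measurableSet_norm_shell r s)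
    aestronglyMeasurable_id (by fun_prop), integral_const_mul, ← mul_sub, norm_mul]
  rcases eq_or_ne α 0 with rfl | hα0
  · rw [norm_zero, zero_mul]
    positivity
  have ha : 0 < ‖α‖ := norm_pos_iff.mpr hα0
  have hshells := norm_setIntegral_id_shell_sub_le (ν := ν)
    (le_div_self hr.le ha hα) (le_div_self hs.le ha hα) (by positivity) (by positivity)
    (hfin r hr) (hfin s hs)
  rw [preimage_mul_left_norm_shell hα0]
  calc _ ≤ ‖α‖ * _ := mul_le_mul_of_nonneg_left hshells ha.le
    _ = _ := by field_simp
end
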